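/- arXiv:1009.5369 — 4 statements merged into one kernel-verified Lean document; each statement's English description precedes it below -/
import Mathlib

section
/- If f₁, f₂, f₃ are orthonormal imaginary octonions and φ = ⟨f₁, f₂f₃⟩, then f₃(f₁f₂) = -2φ - (f₁f₂)f₃. -/
noncomputable section

open Quaternion

/-- Octonions as pairs of quaternions (Cayley–Dickson construction). -/
abbrev Octo : Type := ℍ[ℝ] × ℍ[ℝ]

/-- Octonion multiplication: (q,r)(s,t) = (qs - t̄r, tq + rs̄). -/
def omul (x y : Octo) : Octo :=
  (x.1 * y.1 - star y.2 * x.2, y.2 * x.1 + x.2 * star y.1)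

/-- Octonion conjugation: (q,r)̄ = (q̄, -r). -/
def oconj (x : Octo) : Octo := (star x.1, -x.2)

/-- Inner product ⟨x,y⟩ = (x ȳ + y x̄)/2 (a real multiple of 1, returned as a real). -/
def oinner (x y : Octo) : ℝ :=
  ((omul x (oconj y) + omul y (oconj x)).1).re / 2

/-- x is an imaginary octonion: x + x̄ = 0. -/
def IsIm (x : Octo) : Prop := x + oconj x = 0

/-- Embedding of the reals into the octonions. -/
def oR (r : ℝ) : Octo := ((r : ℍ[ℝ]), 0)

/-- Cross product x×y = (xy - yx)/2. -/
def ocross (x y : Octo) : Octo := (2⁻¹ : ℝ) • (omul x y - omul y x)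

/-- Norm of an octonion. -/
def onorm (x : Octo) : ℝ := Real.sqrt (oinner x x)

/-- Associator [x,y,z] = (xy)z - x(yz). -/
def oassoc (x y z : Octo) : Octo := omul (omul x y) z - omul x (omul y z)

/-- f₁,f₂,f₃ are orthonormal. -/
def OrthoTriple (f1 f2 f3 : Octo) : Prop :=
  oinner f1 f1 = 1 ∧ oinner f2 f2 = 1 ∧ oinner f3 f3 = 1 ∧
  oinner f1 f2 = 0 ∧ oinner f1 f3 = 0 ∧ oinner f2 f3 = 0

/-! For imaginary octonions `x, y` one has `Re (x y) = -⟨x, y⟩` and `x y + y x = -2⟨x, y⟩`.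
Since `f₁ ⊥ f₂`, the product `f₁ f₂` is again imaginary, so the anticommutator of `f₃` and
`f₁ f₂` is `-2⟨f₃, f₁ f₂⟩`, and `⟨f₃, f₁ f₂⟩ = ⟨f₁, f₂ f₃⟩` because `⟨z, x y⟩` is cyclically
symmetric on imaginary octonions. -/

theorem isIm_iff_re_eq_zero {x : Octo} : IsIm x ↔ x.1.re = 0 := by
  constructor
  · intro h
    simpa [oconj] using congrArg (fun y : Octo => y.1.re) h
  · intro h
    refine Prod.ext (QuaternionAlgebra.ext ?_ ?_ ?_ ?_) ?_ <;> simp [oconj, h]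

theorem oinner_eq_neg_re_omul (x : Octo) {y : Octo} (hy : IsIm y) :
    oinner x y = -(omul x y).1.re := by
  rw [isIm_iff_re_eq_zero] at hy
  simp only [oinner, omul, oconj, Prod.fst_add, re_add, re_sub, re_mul, re_neg, re_star,
    imI_neg, imI_star, imJ_neg, imJ_star, imK_neg, imK_star, star_neg, star_star, hy]
  ring

theorem isIm_omul_of_oinner_eq_zero {x y : Octo} (hy : IsIm y) (hxy : oinner x y = 0) :
    IsIm (omul x y) := by
  rw [isIm_iff_re_eq_zero, ← neg_eq_zero, ← oinner_eq_neg_re_omul x hy, hxy]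

theorem omul_add_omul_of_isIm {x y : Octo} (hx : IsIm x) (hy : IsIm y) :
    omul x y + omul y x = oR (-2 * oinner x y) := by
  rw [oinner_eq_neg_re_omul x hy]
  rw [isIm_iff_re_eq_zero] at hx hy
  refine Prod.ext (QuaternionAlgebra.ext ?_ ?_ ?_ ?_) (QuaternionAlgebra.ext ?_ ?_ ?_ ?_) <;>
  · simp only [omul, oR, Prod.fst_add, Prod.snd_add, re_add, re_sub, re_mul, re_star, re_coe,
      re_zero, imI_add, imI_sub, imI_mul, imI_star, imI_coe, imI_zero, imJ_add, imJ_sub, imJ_mul,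
      imJ_star, imJ_coe, imJ_zero, imK_add, imK_sub, imK_mul, imK_star, imK_coe, imK_zero, hx, hy]
    ring

theorem oinner_omul_cyclic {x y z : Octo} (hx : IsIm x) (hy : IsIm y) (hz : IsIm z) :
    oinner z (omul x y) = oinner x (omul y z) := by
  rw [isIm_iff_re_eq_zero] at hx hy hz
  simp only [oinner, omul, oconj, Prod.fst_add, re_add, re_sub, re_mul, re_neg, re_star,
    imI_add, imI_sub, imI_mul, imI_neg, imI_star, imJ_add, imJ_sub, imJ_mul, imJ_neg, imJ_star,
    imK_add, imK_sub, imK_mul, imK_neg, imK_star, star_sub, star_add, star_mul, star_neg, star_star,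
    hx, hy, hz]
  ring

/-- For orthonormal imaginary f₁,f₂,f₃ with φ = ⟨f₁,f₂f₃⟩:
    f₃(f₁f₂) = -2φ - (f₁f₂)f₃. -/
theorem stmt4 (f1 f2 f3 : Octo) (h1 : IsIm f1) (h2 : IsIm f2) (h3 : IsIm f3)
    (hortho : OrthoTriple f1 f2 f3) :
    omul f3 (omul f1 f2) = oR (-2 * oinner f1 (omul f2 f3)) - omul (omul f1 f2) f3 := by
  obtain ⟨-, -, -, h12, -, -⟩ := hortho
  have him : IsIm (omul f1 f2) := isIm_omul_of_oinner_eq_zero h2 h12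
  rw [← oinner_omul_cyclic h1 h2 h3, ← omul_add_omul_of_isIm h3 him, add_sub_cancel_right]
end
end

section
/- Let V be a 2-dimensional subspace of a real inner product space E equipped with a linear map J satisfying J² = -id and ⟨JX,JY⟩ = ⟨X,Y⟩. Then for any X ∈ V, ⟨JX, X⟩ = 0, and for any two orthonormal bases (X,Y) and (X',Y') of V, |⟨X, JY⟩| = |⟨X', JY'⟩|. -/
/-!
Since `J` is an isometry with `J² = -1`, the form `ω(x, y) = ⟪x, J y⟫` is alternating.
Writing `X' = a X + b Y` and `Y' = c X + d Y`, bilinearity gives `ω(X', Y') = (a d - b c) ω(X, Y)`,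
and orthonormality of both pairs forces `(a d - b c)² = 1`.
-/

open RealInnerProductSpace

section

variable {E : Type*} [NormedAddCommGroup E] [InnerProductSpace ℝ E]

theorem real_inner_self_map_eq_zero {J : E →ₗ[ℝ] E} (hJ2 : ∀ x, J (J x) = -x)
    (hJi : ∀ x y : E, ⟪J x, J y⟫ = ⟪x, y⟫) (x : E) : ⟪x, J x⟫ = 0 := by
  have h := hJi x (J x)
  rw [hJ2, inner_neg_right, real_inner_comm] at h
  linarith

theorem real_inner_smul_add_smul_map_smul_add_smul {J : E →ₗ[ℝ] E}
    (hJ : ∀ x, ⟪x, J x⟫ = 0) (X Y : E) (a b c d : ℝ) :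
    ⟪a • X + b • Y, J (c • X + d • Y)⟫ = (a * d - b * c) * ⟪X, J Y⟫ := by
  -- polarising `⟪w, J w⟫ = 0` at `w = X + Y` gives antisymmetry
  have hYX : ⟪Y, J X⟫ = -⟪X, J Y⟫ := by
    have h := hJ (X + Y)
    simp only [map_add, inner_add_left, inner_add_right, hJ] at h
    linarith
  simp only [map_add, map_smul, inner_add_left, inner_add_right, real_inner_smul_left,
    real_inner_smul_right, hJ, hYX]
  ring

theorem real_inner_smul_add_smul_of_orthonormal {X Y : E} (hXn : ‖X‖ = 1) (hYn : ‖Y‖ = 1)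
    (hXY : ⟪X, Y⟫ = 0) (a b c d : ℝ) :
    ⟪a • X + b • Y, c • X + d • Y⟫ = a * c + b * d := by
  have hXX : ⟪X, X⟫ = 1 := by rw [real_inner_self_eq_norm_sq, hXn, one_pow]
  have hYY : ⟪Y, Y⟫ = 1 := by rw [real_inner_self_eq_norm_sq, hYn, one_pow]
  have hYX : ⟪Y, X⟫ = 0 := by rw [real_inner_comm]; exact hXY
  simp only [inner_add_left, inner_add_right, real_inner_smul_left, real_inner_smul_right,
    hXX, hYY, hXY, hYX]
  ring

theorem abs_det_eq_one_of_orthonormal {X Y : E} (hXn : ‖X‖ = 1) (hYn : ‖Y‖ = 1)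
    (hXY : ⟪X, Y⟫ = 0) {a b c d : ℝ} (hXn' : ‖a • X + b • Y‖ = 1) (hYn' : ‖c • X + d • Y‖ = 1)
    (hXY' : ⟪a • X + b • Y, c • X + d • Y⟫ = 0) : |a * d - b * c| = 1 := by
  have inner_eq := real_inner_smul_add_smul_of_orthonormal hXn hYn hXY
  have ha : a * a + b * b = 1 := by
    rw [← inner_eq, real_inner_self_eq_norm_sq, hXn', one_pow]
  have hc : c * c + d * d = 1 := by
    rw [← inner_eq, real_inner_self_eq_norm_sq, hYn', one_pow]
  rw [inner_eq] at hXY'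
  -- Lagrange's identity `(a² + b²)(c² + d²) = (a c + b d)² + (a d - b c)²`
  have hsq : (a * d - b * c) ^ 2 = 1 ^ 2 := by
    linear_combination (c * c + d * d) * ha + hc - (a * c + b * d) * hXY'
  rw [← abs_one]
  exact sq_eq_sq_iff_abs_eq_abs _ _ |>.mp hsq

end

theorem stmt12_general {E : Type*} [NormedAddCommGroup E] [InnerProductSpace ℝ E]
    (J : E →ₗ[ℝ] E) (hJ2 : ∀ x, J (J x) = -x)
    (hJi : ∀ x y : E, (inner ℝ (J x) (J y) : ℝ) = inner ℝ x y)
    (V : Submodule ℝ E)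
    (X Y X' Y' : E)
    (hX' : X' ∈ V) (hY' : Y' ∈ V)
    (hXn : ‖X‖ = 1) (hYn : ‖Y‖ = 1) (hXY : (inner ℝ X Y : ℝ) = 0)
    (hXn' : ‖X'‖ = 1) (hYn' : ‖Y'‖ = 1) (hXY' : (inner ℝ X' Y' : ℝ) = 0)
    (hspan : Submodule.span ℝ {X, Y} = V) :
    (∀ W : E, W ∈ V → (inner ℝ (J W) W : ℝ) = 0) ∧
    |(inner ℝ X (J Y) : ℝ)| = |(inner ℝ X' (J Y') : ℝ)| := by
  have hJ := real_inner_self_map_eq_zero hJ2 hJi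
  refine ⟨fun W _ => real_inner_comm W (J W) ▸ hJ W, ?_⟩
  subst hspan
  obtain ⟨a, b, rfl⟩ := Submodule.mem_span_pair.mp hX'
  obtain ⟨c, d, rfl⟩ := Submodule.mem_span_pair.mp hY'
  rw [real_inner_smul_add_smul_map_smul_add_smul hJ, abs_mul,
    abs_det_eq_one_of_orthonormal hXn hYn hXY hXn' hYn' hXY', one_mul]

/-- For a 2-dimensional subspace V of a real inner product space with orthogonal complex
    structure J: ⟨JX,X⟩ = 0 for all X ∈ V, and |⟨X,JY⟩| is the same for any two
    orthonormal bases (X,Y), (X',Y') of V. -/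
theorem stmt12 {E : Type*} [NormedAddCommGroup E] [InnerProductSpace ℝ E]
    (J : E →ₗ[ℝ] E) (hJ2 : ∀ x, J (J x) = -x)
    (hJi : ∀ x y : E, (inner ℝ (J x) (J y) : ℝ) = inner ℝ x y)
    (V : Submodule ℝ E) (hV : Module.finrank ℝ V = 2)
    (X Y X' Y' : E)
    (hX : X ∈ V) (hY : Y ∈ V) (hX' : X' ∈ V) (hY' : Y' ∈ V)
    (hXn : ‖X‖ = 1) (hYn : ‖Y‖ = 1) (hXY : (inner ℝ X Y : ℝ) = 0)
    (hXn' : ‖X'‖ = 1) (hYn' : ‖Y'‖ = 1) (hXY' : (inner ℝ X' Y' : ℝ) = 0)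
    (hspan : Submodule.span ℝ {X, Y} = V)
    (hspan' : Submodule.span ℝ {X', Y'} = V) :
    (∀ W : E, W ∈ V → (inner ℝ (J W) W : ℝ) = 0) ∧
    |(inner ℝ X (J Y) : ℝ)| = |(inner ℝ X' (J Y') : ℝ)| :=
  stmt12_general J hJ2 hJi V X Y X' Y' hX' hY' hXn hYn hXY hXn' hYn' hXY' hspan
end

section
/- With X̄ = (0,-x₃,x₂,0,0,y₃,-y₂) and Ȳ = (0,0,0,-y₁,y₀,-y₃,y₂) tangent to the torus orbit at p = (x₁,x₂,x₃,y₀,y₁,y₂,y₃) ∈ S⁶ ⊂ Im 𝕆, and (X,Y) the orthonormalization of (X̄,Ȳ), the cosine of the slant angle |⟨X, p×Y⟩| equals |x₃y₁y₂ - x₂y₀y₂ - x₂y₁y₃ - x₃y₀y₃| / √(αβ - (x₂²+x₃²)²), where α = x₂²+x₃²+y₀²+y₁² and β = x₂²+x₃²+y₂²+y₃², assuming α, β > 0 and αβ > (x₂²+x₃²)². -/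
noncomputable section

open Quaternion

/-- Imaginary octonion with coordinates (x₁,x₂,x₃,y₀,y₁,y₂,y₃) in the standard basis
    e₁,…,e₇ of Im 𝕆. -/
def oofC (x1 x2 x3 y0 y1 y2 y3 : ℝ) : Octo := (⟨0, x1, x2, x3⟩, ⟨y0, y1, y2, y3⟩)

/-! Gram–Schmidt turns `(X̄, Ȳ)` into `X = X̄/|X̄|` and `Y = W/|W|` with `W = Ȳ - (⟨Ȳ,X̄⟩/|X̄|²) X̄`.
Since `p × X̄ ⊥ X̄`, the slant cosine is `⟨X̄, p × Ȳ⟩ / (|X̄| |W|)`, and `|X̄| |W|` is the square root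
of the Gram determinant of `X̄, Ȳ`. For the torus tangent vectors this determinant equals
`αβ - (x₂² + x₃²)²` and `⟨X̄, p × Ȳ⟩` is minus the cubic in the numerator. -/

lemma omul_smul_left (r : ℝ) (x y : Octo) : omul (r • x) y = r • omul x y := by
  simp [omul, Prod.smul_def, smul_sub, smul_add]

lemma omul_smul_right (r : ℝ) (x y : Octo) : omul x (r • y) = r • omul x y := by
  simp [omul, Prod.smul_def, smul_sub, smul_add]

lemma omul_sub_left (x y z : Octo) : omul (x - y) z = omul x z - omul y z := by
  simp only [omul, Prod.fst_sub, Prod.snd_sub, sub_mul, mul_sub, Prod.mk_sub_mk, Prod.mk.injEq]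
  constructor <;> abel

lemma omul_sub_right (x y z : Octo) : omul x (y - z) = omul x y - omul x z := by
  simp only [omul, Prod.fst_sub, Prod.snd_sub, sub_mul, mul_sub, Prod.mk_sub_mk, Prod.mk.injEq,
    star_sub]
  constructor <;> abel

lemma oconj_smul (r : ℝ) (x : Octo) : oconj (r • x) = r • oconj x := by
  simp [oconj, Prod.smul_def]

lemma oconj_sub (x y : Octo) : oconj (x - y) = oconj x - oconj y := by
  simp [oconj, sub_eq_add_neg, add_comm]

lemma oinner_comm (x y : Octo) : oinner x y = oinner y x := by
  rw [oinner, oinner, add_comm]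

lemma oinner_smul_left (r : ℝ) (x y : Octo) : oinner (r • x) y = r * oinner x y := by
  simp only [oinner, omul_smul_left, oconj_smul, omul_smul_right, Prod.fst_add, Prod.smul_fst,
    Quaternion.re_add, Quaternion.re_smul, smul_eq_mul]
  ring

lemma oinner_smul_right (r : ℝ) (x y : Octo) : oinner x (r • y) = r * oinner x y := by
  rw [oinner_comm, oinner_smul_left, oinner_comm]

lemma oinner_sub_left (x y z : Octo) : oinner (x - y) z = oinner x z - oinner y z := by
  simp only [oinner, omul_sub_left, oconj_sub, omul_sub_right, Prod.fst_add, Prod.fst_sub,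
    Quaternion.re_add, Quaternion.re_sub]
  ring

lemma oinner_sub_right (x y z : Octo) : oinner x (y - z) = oinner x y - oinner x z := by
  rw [oinner_comm, oinner_sub_left, oinner_comm, oinner_comm z]

lemma ocross_smul_right (r : ℝ) (x y : Octo) : ocross x (r • y) = r • ocross x y := by
  rw [ocross, ocross, omul_smul_right, omul_smul_left, ← smul_sub, smul_comm]

lemma ocross_sub_right (x y z : Octo) : ocross x (y - z) = ocross x y - ocross x z := by
  rw [ocross, ocross, ocross, omul_sub_right, omul_sub_left, ← smul_sub]
  congr 1
  abel

lemma oinner_ocross_self (p x : Octo) : oinner x (ocross p x) = 0 := by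
  simp [oinner, omul, oconj, ocross, re_mul, imI_mul, imJ_mul, imK_mul]
  ring

lemma oinner_gramSchmidt_self (u v : Octo) (hu : 0 < oinner u u) :
    let w := v - (oinner v u / oinner u u) • u
    oinner w w = (oinner u u * oinner v v - oinner u v ^ 2) / oinner u u := by
  intro w
  simp only [w, oinner_sub_left, oinner_sub_right, oinner_smul_left, oinner_smul_right,
    oinner_comm v u]
  field_simp
  ring

lemma oinner_ocross_gramSchmidt (p u v : Octo) (hu : 0 < oinner u u) :
    let x := (onorm u)⁻¹ • u
    let w := v - oinner v x • x
    oinner x (ocross p ((onorm w)⁻¹ • w)) =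
      oinner u (ocross p v) / √(oinner u u * oinner v v - oinner u v ^ 2) := by
  intro x w
  have hw : w = v - (oinner v u / oinner u u) • u := by
    simp only [w, x, onorm, oinner_smul_right, smul_smul]
    congr 2
    field_simp
    rw [Real.sq_sqrt hu.le]
    ring
  have hnw : onorm w = √(oinner u u * oinner v v - oinner u v ^ 2) / √(oinner u u) := by
    rw [onorm, hw, oinner_gramSchmidt_self u v hu, Real.sqrt_div' _ hu.le]
  rw [hnw, hw]
  simp only [x, onorm, oinner_smul_left, ocross_smul_right, oinner_smul_right, ocross_sub_right,
    oinner_sub_right, oinner_ocross_self, mul_zero, sub_zero]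
  field_simp

section
variable (x1 x2 x3 y0 y1 y2 y3 : ℝ)
@[simp] lemma oofC_fst_re : (oofC x1 x2 x3 y0 y1 y2 y3).1.re = 0 := rfl
@[simp] lemma oofC_fst_imI : (oofC x1 x2 x3 y0 y1 y2 y3).1.imI = x1 := rfl
@[simp] lemma oofC_fst_imJ : (oofC x1 x2 x3 y0 y1 y2 y3).1.imJ = x2 := rfl
@[simp] lemma oofC_fst_imK : (oofC x1 x2 x3 y0 y1 y2 y3).1.imK = x3 := rfl
@[simp] lemma oofC_snd_re : (oofC x1 x2 x3 y0 y1 y2 y3).2.re = y0 := rfl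
@[simp] lemma oofC_snd_imI : (oofC x1 x2 x3 y0 y1 y2 y3).2.imI = y1 := rfl
@[simp] lemma oofC_snd_imJ : (oofC x1 x2 x3 y0 y1 y2 y3).2.imJ = y2 := rfl
@[simp] lemma oofC_snd_imK : (oofC x1 x2 x3 y0 y1 y2 y3).2.imK = y3 := rfl
end

lemma oinner_oofC (a1 a2 a3 a4 a5 a6 a7 b1 b2 b3 b4 b5 b6 b7 : ℝ) :
    oinner (oofC a1 a2 a3 a4 a5 a6 a7) (oofC b1 b2 b3 b4 b5 b6 b7) =
      a1 * b1 + a2 * b2 + a3 * b3 + a4 * b4 + a5 * b5 + a6 * b6 + a7 * b7 := by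
  simp [oinner, omul, oconj, re_mul]
  ring

lemma oinner_ocross_torus_tangent (x1 x2 x3 y0 y1 y2 y3 : ℝ) :
    oinner (oofC 0 (-x3) x2 0 0 y3 (-y2))
      (ocross (oofC x1 x2 x3 y0 y1 y2 y3) (oofC 0 0 0 (-y1) y0 (-y3) y2)) =
      -(x3 * y1 * y2 - x2 * y0 * y2 - x2 * y1 * y3 - x3 * y0 * y3) := by
  simp [oinner, omul, oconj, ocross, re_mul, imI_mul, imJ_mul, imK_mul]
  ring

theorem stmt17_general (x1 x2 x3 y0 y1 y2 y3 : ℝ)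
    (hb : 0 < x2 ^ 2 + x3 ^ 2 + y2 ^ 2 + y3 ^ 2) :
    let p := oofC x1 x2 x3 y0 y1 y2 y3
    let Xb := oofC 0 (-x3) x2 0 0 y3 (-y2)
    let Yb := oofC 0 0 0 (-y1) y0 (-y3) y2
    let X := (onorm Xb)⁻¹ • Xb
    let W := Yb - oinner Yb X • X
    let Y := (onorm W)⁻¹ • W
    |oinner X (ocross p Y)| =
      |x3 * y1 * y2 - x2 * y0 * y2 - x2 * y1 * y3 - x3 * y0 * y3| /
        Real.sqrt ((x2 ^ 2 + x3 ^ 2 + y0 ^ 2 + y1 ^ 2) * (x2 ^ 2 + x3 ^ 2 + y2 ^ 2 + y3 ^ 2) -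
          (x2 ^ 2 + x3 ^ 2) ^ 2) := by
  intro p Xb Yb X W Y
  have hXb : 0 < oinner Xb Xb := by
    simp only [Xb, oinner_oofC]
    linarith
  rw [oinner_ocross_gramSchmidt p Xb Yb hXb, abs_div, abs_of_nonneg (Real.sqrt_nonneg _)]
  simp only [p, Xb, Yb, oinner_ocross_torus_tangent, abs_neg, oinner_oofC]
  congr 2
  ring

/-- The cosine of the slant angle of the torus orbit through p ∈ S⁶, computed from the
    orthonormalization (X,Y) of the tangent vectors (X̄,Ȳ), equals
    |x₃y₁y₂ - x₂y₀y₂ - x₂y₁y₃ - x₃y₀y₃| / √(αβ - (x₂²+x₃²)²). -/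
theorem stmt17 (x1 x2 x3 y0 y1 y2 y3 : ℝ)
    (hp : x1 ^ 2 + x2 ^ 2 + x3 ^ 2 + y0 ^ 2 + y1 ^ 2 + y2 ^ 2 + y3 ^ 2 = 1)
    (ha : 0 < x2 ^ 2 + x3 ^ 2 + y0 ^ 2 + y1 ^ 2)
    (hb : 0 < x2 ^ 2 + x3 ^ 2 + y2 ^ 2 + y3 ^ 2)
    (hd : (x2 ^ 2 + x3 ^ 2) ^ 2 <
      (x2 ^ 2 + x3 ^ 2 + y0 ^ 2 + y1 ^ 2) * (x2 ^ 2 + x3 ^ 2 + y2 ^ 2 + y3 ^ 2)) :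
    let p := oofC x1 x2 x3 y0 y1 y2 y3
    let Xb := oofC 0 (-x3) x2 0 0 y3 (-y2)
    let Yb := oofC 0 0 0 (-y1) y0 (-y3) y2
    let X := (onorm Xb)⁻¹ • Xb
    let W := Yb - oinner Yb X • X
    let Y := (onorm W)⁻¹ • W
    |oinner X (ocross p Y)| =
      |x3 * y1 * y2 - x2 * y0 * y2 - x2 * y1 * y3 - x3 * y0 * y3| /
        Real.sqrt ((x2 ^ 2 + x3 ^ 2 + y0 ^ 2 + y1 ^ 2) * (x2 ^ 2 + x3 ^ 2 + y2 ^ 2 + y3 ^ 2) -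
          (x2 ^ 2 + x3 ^ 2) ^ 2) :=
  stmt17_general x1 x2 x3 y0 y1 y2 y3 hb
end
end

section
/- For p = (1/√3)(0,0,1,0,1,cos φ, sin φ) ∈ S⁶ ⊂ ℝ⁷ with any φ ∈ [0,2π), the cosine of the slant angle of the torus orbit through p, given by |x₃y₁y₂ - x₂y₀y₂ - x₂y₁y₃ - x₃y₀y₃|/√(αβ - (x₂²+x₃²)²) with coordinates p = (x₁,x₂,x₃,y₀,y₁,y₂,y₃), α = x₂²+x₃²+y₀²+y₁², β = x₂²+x₃²+y₂²+y₃², equals |cos φ|/3. -/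
noncomputable section

open Real

/-! The slant-angle cosine is homogeneous of degree one in `p`, so it suffices to evaluate it at
`√3 • p = (0,0,1,0,1,cos φ,sin φ)`, where the numerator is `cos φ` and the radicand is
`2 · 2 - 1 = 3`. -/

def torusOrbitSlantCos (x2 x3 y0 y1 y2 y3 : ℝ) : ℝ :=
  |x3 * y1 * y2 - x2 * y0 * y2 - x2 * y1 * y3 - x3 * y0 * y3| /
    Real.sqrt ((x2 ^ 2 + x3 ^ 2 + y0 ^ 2 + y1 ^ 2) * (x2 ^ 2 + x3 ^ 2 + y2 ^ 2 + y3 ^ 2) -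
      (x2 ^ 2 + x3 ^ 2) ^ 2)

theorem torusOrbitSlantCos_div (t x2 x3 y0 y1 y2 y3 : ℝ) :
    torusOrbitSlantCos (x2 / t) (x3 / t) (y0 / t) (y1 / t) (y2 / t) (y3 / t) =
      torusOrbitSlantCos x2 x3 y0 y1 y2 y3 / |t| := by
  rcases eq_or_ne t 0 with rfl | ht
  · simp [torusOrbitSlantCos]
  have hnum : x3 / t * (y1 / t) * (y2 / t) - x2 / t * (y0 / t) * (y2 / t) -
      x2 / t * (y1 / t) * (y3 / t) - x3 / t * (y0 / t) * (y3 / t) =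
      (x3 * y1 * y2 - x2 * y0 * y2 - x2 * y1 * y3 - x3 * y0 * y3) / t ^ 3 := by
    field_simp
  have hrad : ((x2 / t) ^ 2 + (x3 / t) ^ 2 + (y0 / t) ^ 2 + (y1 / t) ^ 2) *
      ((x2 / t) ^ 2 + (x3 / t) ^ 2 + (y2 / t) ^ 2 + (y3 / t) ^ 2) - ((x2 / t) ^ 2 + (x3 / t) ^ 2) ^ 2 =
      ((x2 ^ 2 + x3 ^ 2 + y0 ^ 2 + y1 ^ 2) * (x2 ^ 2 + x3 ^ 2 + y2 ^ 2 + y3 ^ 2) -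
        (x2 ^ 2 + x3 ^ 2) ^ 2) / (t ^ 2) ^ 2 := by
    field_simp
  rw [torusOrbitSlantCos, torusOrbitSlantCos, hnum, hrad, Real.sqrt_div' _ (by positivity),
    Real.sqrt_sq (by positivity), abs_div, abs_pow, ← sq_abs t]
  field_simp

theorem torusOrbitSlantCos_cos_sin (φ : ℝ) :
    torusOrbitSlantCos 0 1 0 1 (cos φ) (sin φ) = |cos φ| / √3 := by
  have hrad : (0 ^ 2 + 1 ^ 2 + 0 ^ 2 + 1 ^ 2) * (0 ^ 2 + 1 ^ 2 + cos φ ^ 2 + sin φ ^ 2) -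
      (0 ^ 2 + 1 ^ 2 : ℝ) ^ 2 = 3 := by
    nlinarith [sin_sq_add_cos_sq φ]
  rw [torusOrbitSlantCos, hrad]
  ring_nf

theorem stmt19_general (phi : ℝ) :
    let x1 : ℝ := 0
    let x2 : ℝ := 0
    let x3 : ℝ := 1 / Real.sqrt 3
    let y0 : ℝ := 0
    let y1 : ℝ := 1 / Real.sqrt 3
    let y2 : ℝ := cos phi / Real.sqrt 3
    let y3 : ℝ := sin phi / Real.sqrt 3
    |x3 * y1 * y2 - x2 * y0 * y2 - x2 * y1 * y3 - x3 * y0 * y3| /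
        Real.sqrt ((x2 ^ 2 + x3 ^ 2 + y0 ^ 2 + y1 ^ 2) * (x2 ^ 2 + x3 ^ 2 + y2 ^ 2 + y3 ^ 2) -
          (x2 ^ 2 + x3 ^ 2) ^ 2) =
      |cos phi| / 3 := by
  have hscaled := torusOrbitSlantCos_div √3 0 1 0 1 (cos phi) (sin phi)
  rw [zero_div, torusOrbitSlantCos_cos_sin, abs_of_pos (show (0 : ℝ) < √3 by positivity), div_div,
    Real.mul_self_sqrt (by norm_num)] at hscaled
  exact hscaled

/-- For p = (1/√3)(0,0,1,0,1,cos φ,sin φ) ∈ S⁶, the cosine of the slant angle of the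
    torus orbit through p equals |cos φ|/3. -/
theorem stmt19 (phi : ℝ) (hphi : phi ∈ Set.Ico 0 (2 * π)) :
    let x1 : ℝ := 0
    let x2 : ℝ := 0
    let x3 : ℝ := 1 / Real.sqrt 3
    let y0 : ℝ := 0
    let y1 : ℝ := 1 / Real.sqrt 3
    let y2 : ℝ := cos phi / Real.sqrt 3
    let y3 : ℝ := sin phi / Real.sqrt 3
    |x3 * y1 * y2 - x2 * y0 * y2 - x2 * y1 * y3 - x3 * y0 * y3| /
        Real.sqrt ((x2 ^ 2 + x3 ^ 2 + y0 ^ 2 + y1 ^ 2) * (x2 ^ 2 + x3 ^ 2 + y2 ^ 2 + y3 ^ 2) -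
          (x2 ^ 2 + x3 ^ 2) ^ 2) =
      |cos phi| / 3 :=
  stmt19_general phi
end
end
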